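/- arXiv:math/9704220 — 3 statements merged into one kernel-verified Lean document; each statement's English description precedes it below -/
import Mathlib

section
/- Let α > 1 be irrational with convergents p_n/q_n and error function E(p) = p − qα (q nearest). If p is a positive integer with |E(p)| < |E(p_{n-1})| and p ≤ k·p_{n+1} for a positive integer k, then p = i·p_{n-1} + j·p_n for some non-negative integers i, j with i ≤ k. -/
/-- `E α n` is the error `n - qα` where `qα` is the integer multiple of `α`
nearest to `n` (for `α > 1`, this multiple is `round (n/α) * α`). -/
noncomputable def E (α : ℝ) (n : ℕ) : ℝ := (n : ℝ) - round ((n : ℝ) / α) * α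

/-- `A_α`: positive integers whose nearest multiple of `α` exceeds them. -/
def Aset (α : ℝ) : Set ℕ := {n | 0 < n ∧ E α n < 0}

/-- `B_α`: positive integers whose nearest multiple of `α` is below them. -/
def Bset (α : ℝ) : Set ℕ := {n | 0 < n ∧ 0 < E α n}

/-- `S_α`: positive integers not expressible as a sum of two distinct elements
of `A_α` nor of two distinct elements of `B_α`. -/
def Sset (α : ℝ) : Set ℕ :=
  {s | 0 < s ∧ (∀ x ∈ Aset α, ∀ y ∈ Aset α, x ≠ y → x + y ≠ s) ∧
       (∀ x ∈ Bset α, ∀ y ∈ Bset α, x ≠ y → x + y ≠ s)}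
/-- Data of the continued fraction expansion `α = [a 0; a 1, a 2, ...]` of an
irrational `α > 1`, with `t n` the successive complete quotients, and
`p n / q n` the convergents. -/
structure CF (α : ℝ) where
  a : ℕ → ℕ
  t : ℕ → ℝ
  p : ℕ → ℕ
  q : ℕ → ℕ
  t0 : t 0 = α
  ha : ∀ n, 1 ≤ a n
  floor_t : ∀ n, (a n : ℝ) = ⌊t n⌋
  t_rec : ∀ n, t n = a n + 1 / t (n + 1)
  p0 : p 0 = a 0
  p1 : p 1 = a 1 * a 0 + 1
  p_rec : ∀ n, p (n + 2) = a (n + 2) * p (n + 1) + p n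
  q0 : q 0 = 1
  q1 : q 1 = a 1
  q_rec : ∀ n, q (n + 2) = a (n + 2) * q (n + 1) + q n

/-- The numerators extended by two initial terms: `P 0 = p_{-2} = 0`,
`P 1 = p_{-1} = 1`, and `P (n+2) = p n`. -/
def CF.P {α : ℝ} (c : CF α) : ℕ → ℕ
  | 0 => 0
  | 1 => 1
  | n + 2 => c.p n

/-!
Write `D m = p_{m-1} - q_{m-1} α` for the error of the `(m-1)`-st convergent. The matrix with
columns `(p_{n-1}, q_{n-1})` and `(p_n, q_n)` is unimodular, so the numerator `p` and its nearest
denominator `q` are `i • (p_{n-1}, q_{n-1}) + j • (p_n, q_n)` for integers `i, j`, and then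
`E p = i D_n + j D_{n+1} = (j - i t) D_{n+1}` because `D_n = -t D_{n+1}`, `t = t_{n+1}` being a
complete quotient. Since `|E p_{n-1}| ≤ |D_n| = t |D_{n+1}|`, the hypothesis gives `|j - i t| < t`.
This forces `i` and `j` to have the same sign, hence both are nonnegative since `p ≥ 0`; and
`i > k` would give `j > k t ≥ k a_{n+1}`, hence `p > k (a_{n+1} p_n + p_{n-1}) = k p_{n+1}`.
-/

theorem abs_E_le_abs_sub_mul {α : ℝ} (hα : 0 < α) (m : ℕ) (z : ℤ) :
    |E α m| ≤ |(m : ℝ) - z * α| := by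
  have key (w : ℤ) : (m : ℝ) - w * α = α * ((m : ℝ) / α - w) := by field_simp
  rw [E, key, key, abs_mul, abs_mul]
  exact mul_le_mul_of_nonneg_left (round_le _ z) (abs_nonneg α)

theorem nonneg_of_abs_sub_mul_lt {i j : ℤ} {t : ℝ} {P P' : ℕ} (ht : 0 ≤ t) (hP' : 0 < P')
    (hij : |(j : ℝ) - i * t| < t) (hnonneg : 0 ≤ i * P + j * P') : 0 ≤ i ∧ 0 ≤ j := by
  obtain ⟨hlow, hup⟩ := abs_lt.mp hij
  have hi_of_hj (hj : 0 ≤ j) : 0 ≤ i := by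
    by_contra! hi
    have : (i : ℝ) ≤ -1 := by exact_mod_cast Int.le_sub_one_of_lt hi
    have : (0 : ℝ) ≤ j := by exact_mod_cast hj
    nlinarith
  have hj : 0 ≤ j := by
    by_contra! hj
    have : (j : ℝ) ≤ -1 := by exact_mod_cast Int.le_sub_one_of_lt hj
    rcases le_or_gt i 0 with hi | hi
    · nlinarith [Int.natCast_nonneg P]
    · have : (1 : ℝ) ≤ i := by exact_mod_cast hi
      nlinarith
  exact ⟨hi_of_hj hj, hj⟩

theorem le_of_abs_sub_mul_lt {i j : ℤ} {t : ℝ} {a P P' k : ℕ} (hat : (a : ℝ) ≤ t) (hP' : 0 < P')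
    (hij : |(j : ℝ) - i * t| < t) (hle : i * P + j * P' ≤ k * (a * P' + P)) : i ≤ k := by
  by_contra! hik
  have hik' : (k : ℝ) + 1 ≤ i := by exact_mod_cast hik
  have hkt : (k : ℝ) * a < j := by
    nlinarith [(abs_lt.mp hij).1, Nat.cast_nonneg (α := ℝ) k, Nat.cast_nonneg (α := ℝ) a]
  have hja : (k : ℤ) * a + 1 ≤ j := by exact_mod_cast hkt
  nlinarith [Int.natCast_nonneg P]

namespace CF

variable {α : ℝ} (c : CF α)

/-- `Q 0 = q_{-2}`, `Q 1 = q_{-1}`, `Q (n + 2) = q_n`, as for `CF.P`. -/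
def Q : ℕ → ℕ
  | 0 => 1
  | 1 => 0
  | n + 2 => c.q n

theorem P_add_two : ∀ m, c.P (m + 2) = c.a m * c.P (m + 1) + c.P m
  | 0 => by simp [P, c.p0]
  | 1 => by simp [P, c.p0, c.p1]
  | m + 2 => c.p_rec m

theorem Q_add_two : ∀ m, c.Q (m + 2) = c.a m * c.Q (m + 1) + c.Q m
  | 0 => by simp [Q, c.q0]
  | 1 => by simp [Q, c.q0, c.q1]
  | m + 2 => c.q_rec m

theorem a_le_t (m : ℕ) : (c.a m : ℝ) ≤ c.t m := by
  rw [c.floor_t]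
  exact Int.floor_le _

theorem t_pos (m : ℕ) : 0 < c.t m :=
  lt_of_lt_of_le (by exact_mod_cast c.ha m) (c.a_le_t m)

theorem P_pos (m : ℕ) : 0 < c.P (m + 1) := by
  induction m using Nat.twoStepInduction with
  | zero => simp [P]
  | one => show 0 < c.p 0; exact c.p0 ▸ c.ha 0
  | more m _ ih =>
    rw [P_add_two]
    exact Nat.add_pos_left (Nat.mul_pos (c.ha (m + 1)) ih) _

theorem P_mul_Q_sub_P_mul_Q (m : ℕ) :
    (c.P (m + 1) : ℤ) * c.Q (m + 2) - c.P (m + 2) * c.Q (m + 1) = (-1) ^ m := by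
  induction m with
  | zero => simp [P, Q, c.q0]
  | succ m ih =>
    rw [c.P_add_two (m + 1), c.Q_add_two (m + 1), pow_succ]
    push_cast
    linear_combination -ih

theorem exists_eq_combination (p q : ℤ) (m : ℕ) : ∃ i j : ℤ,
    p = i * c.P (m + 1) + j * c.P (m + 2) ∧ q = i * c.Q (m + 1) + j * c.Q (m + 2) := by
  have hdet := c.P_mul_Q_sub_P_mul_Q m
  have hsq : ((-1 : ℤ) ^ m) ^ 2 = 1 := by rw [sq, ← mul_pow]; simp
  refine ⟨(-1) ^ m * (p * c.Q (m + 2) - q * c.P (m + 2)),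
    (-1) ^ m * (q * c.P (m + 1) - p * c.Q (m + 1)), ?_, ?_⟩
  · linear_combination (-(-1) ^ m * p) * hdet - p * hsq
  · linear_combination (-(-1) ^ m * q) * hdet - q * hsq

noncomputable def D (m : ℕ) : ℝ := c.P (m + 1) - c.Q (m + 1) * α

theorem D_eq_neg_t_mul (m : ℕ) : c.D m = -c.t (m + 1) * c.D (m + 1) := by
  induction m with
  | zero =>
    have h := c.t_rec 0
    rw [c.t0] at h
    have := (c.t_pos 1).ne'
    field_simp at h
    simp only [D, P, Q, c.p0, c.q0]
    push_cast
    linear_combination -h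
  | succ m ih =>
    have hD : c.D (m + 2) = c.a (m + 1) * c.D (m + 1) + c.D m := by
      simp only [D, c.P_add_two (m + 1), c.Q_add_two (m + 1)]
      push_cast
      ring
    have h := c.t_rec (m + 1)
    have := (c.t_pos (m + 2)).ne'
    rw [hD, ih]
    field_simp at h
    linear_combination -c.D (m + 1) * h

end CF

theorem stmt5_general (α : ℝ) (c : CF α) (n : ℕ)
    (p : ℕ) (k : ℕ)
    (hE : |E α p| < |E α (c.P (n + 1))|) (hle : p ≤ k * c.P (n + 3)) :
    ∃ i j : ℕ, i ≤ k ∧ p = i * c.P (n + 1) + j * c.P (n + 2) := by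
  have hα : 0 < α := c.t0 ▸ c.t_pos 0
  set t := c.t (n + 1)
  obtain ⟨i, j, hp, hq⟩ := c.exists_eq_combination p (round ((p : ℝ) / α)) n
  have hEp : E α p = (j - i * t) * c.D (n + 1) := by
    have hp' : (p : ℝ) = i * c.P (n + 1) + j * c.P (n + 2) := by exact_mod_cast hp
    have hq' : (round ((p : ℝ) / α) : ℝ) = i * c.Q (n + 1) + j * c.Q (n + 2) := by
      exact_mod_cast hq
    have hD := c.D_eq_neg_t_mul n
    simp only [CF.D] at hD ⊢
    rw [E, hq', hp']
    linear_combination (i : ℝ) * hD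
  have hEP : |E α (c.P (n + 1))| ≤ t * |c.D (n + 1)| := by
    calc |E α (c.P (n + 1))| ≤ |c.D n| := by
          simpa [CF.D] using abs_E_le_abs_sub_mul hα _ (c.Q (n + 1))
      _ = t * |c.D (n + 1)| := by
          rw [c.D_eq_neg_t_mul, abs_mul, abs_neg, abs_of_pos (c.t_pos _)]
  have hij : |(j : ℝ) - i * t| < t :=
    lt_of_mul_lt_mul_right (by rw [← abs_mul, ← hEp]; linarith) (abs_nonneg (c.D (n + 1)))
  rw [show c.P (n + 3) = _ from c.P_add_two (n + 1)] at hle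
  have ht : 0 ≤ t := (c.t_pos _).le
  obtain ⟨hi, hj⟩ := nonneg_of_abs_sub_mul_lt ht (c.P_pos (n + 1)) hij (hp ▸ Int.natCast_nonneg p)
  have hik := le_of_abs_sub_mul_lt (c.a_le_t (n + 1)) (c.P_pos (n + 1)) hij
    (by rw [← hp]; exact_mod_cast hle)
  lift i to ℕ using hi
  lift j to ℕ using hj
  exact ⟨i, j, by exact_mod_cast hik, by exact_mod_cast hp⟩

/-- Lemma 2: if `|E p| < |E p_{n-1}|` and `p ≤ k * p_{n+1}`, then
`p = i * p_{n-1} + j * p_n` with `i, j ≥ 0` and `i ≤ k`.  Indices are shifted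
by two: `c.P (n+1) = p_{n-1}`, `c.P (n+2) = p_n`, `c.P (n+3) = p_{n+1}`. -/
theorem stmt5 (α : ℝ) (hα : 1 < α) (hirr : Irrational α) (c : CF α) (n : ℕ)
    (p : ℕ) (hp : 0 < p) (k : ℕ) (hk : 0 < k)
    (hE : |E α p| < |E α (c.P (n + 1))|) (hle : p ≤ k * c.P (n + 3)) :
    ∃ i j : ℕ, i ≤ k ∧ p = i * c.P (n + 1) + j * c.P (n + 2) :=
  stmt5_general α c n p k hE hle
end

section
/- With notation as above, if E(x) > 0 then x ∈ S_α if and only if there is no positive integer y < x with y ≠ x/2 satisfying either 0 < E(y) < E(x) or 0 < E(y) + α/2 < E(x). -/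
/-!
Since `n ≡ E α n` modulo `αℤ` and `|E α n| < α/2`, for `y + z = x` we have
`E x = E y + E z + kα` with an integer `k` that the signs of the errors pin down:
`k = 0` when `y, z ∈ B_α` and `k = 1` when `y, z ∈ A_α`. Solving for `E z` turns
"`y` and `x - y` lie in the same part" into the two inequalities on `E y`.
-/

lemma E_add (α : ℝ) (y z : ℕ) : ∃ k : ℤ, E α (y + z) = E α y + E α z + k * α :=
  ⟨round ((y : ℝ) / α) + round ((z : ℝ) / α) - round (((y + z : ℕ) : ℝ) / α), by
    unfold E; push_cast; ring⟩

lemma abs_E_lt {α : ℝ} (hα : 0 < α) (hirr : Irrational α) (n : ℕ) : |E α n| < α / 2 := by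
  have hle : |E α n| ≤ α / 2 := by
    have hE : E α n = ((n : ℝ) / α - round ((n : ℝ) / α)) * α := by unfold E; field_simp
    rw [hE, abs_mul, abs_of_pos hα]
    nlinarith [abs_sub_round ((n : ℝ) / α)]
  refine hle.lt_of_ne fun h => ?_
  -- `E α n = ±α/2` would make `(2 round (n/α) ± 1) α = 2n` rational
  rcases abs_eq (by positivity : (0 : ℝ) ≤ α / 2) |>.mp h with h | h
  · refine (hirr.intCast_mul (m := 2 * round ((n : ℝ) / α) + 1) (by omega)).ne_nat (2 * n) ?_
    unfold E at h; push_cast; linarith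
  · refine (hirr.intCast_mul (m := 2 * round ((n : ℝ) / α) - 1) (by omega)).ne_nat (2 * n) ?_
    unfold E at h; push_cast; linarith

lemma Int.eq_of_mul_lt_of_lt_mul {α : ℝ} (hα : 0 < α) {k m : ℤ}
    (h₁ : (m - 1) * α < k * α) (h₂ : k * α < (m + 1) * α) : k = m := by
  have h₁ : (m - 1 : ℝ) < k := (mul_lt_mul_iff_of_pos_right hα).mp h₁
  have h₂ : (k : ℝ) < m + 1 := (mul_lt_mul_iff_of_pos_right hα).mp h₂
  norm_cast at h₁ h₂
  omega

lemma mem_Bset_and_mem_Bset_iff {α : ℝ} (hα : 0 < α) (hirr : Irrational α) {y z : ℕ}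
    (hy : 0 < y) (hz : 0 < z) (hE : 0 < E α (y + z)) :
    y ∈ Bset α ∧ z ∈ Bset α ↔ 0 < E α y ∧ E α y < E α (y + z) := by
  obtain ⟨k, hk⟩ := E_add α y z
  have := abs_lt.mp (abs_E_lt hα hirr y)
  have := abs_lt.mp (abs_E_lt hα hirr z)
  have := abs_lt.mp (abs_E_lt hα hirr (y + z))
  constructor
  · rintro ⟨⟨-, hEy⟩, -, hEz⟩
    have hk0 : k = 0 :=
      Int.eq_of_mul_lt_of_lt_mul hα (by push_cast; linarith) (by push_cast; linarith)
    subst hk0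
    exact ⟨hEy, by push_cast at hk; linarith⟩
  · rintro ⟨hEy, hlt⟩
    have hk0 : k = 0 :=
      Int.eq_of_mul_lt_of_lt_mul hα (by push_cast; linarith) (by push_cast; linarith)
    subst hk0
    exact ⟨⟨hy, hEy⟩, hz, by push_cast at hk; linarith⟩

lemma mem_Aset_and_mem_Aset_iff {α : ℝ} (hα : 0 < α) (hirr : Irrational α) {y z : ℕ}
    (hy : 0 < y) (hz : 0 < z) (hE : 0 < E α (y + z)) :
    y ∈ Aset α ∧ z ∈ Aset α ↔ 0 < E α y + α / 2 ∧ E α y + α / 2 < E α (y + z) := by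
  obtain ⟨k, hk⟩ := E_add α y z
  have := abs_lt.mp (abs_E_lt hα hirr y)
  have := abs_lt.mp (abs_E_lt hα hirr z)
  have := abs_lt.mp (abs_E_lt hα hirr (y + z))
  constructor
  · rintro ⟨⟨-, hEy⟩, -, hEz⟩
    have hk1 : k = 1 :=
      Int.eq_of_mul_lt_of_lt_mul hα (by push_cast; linarith) (by push_cast; linarith)
    subst hk1
    exact ⟨by linarith, by push_cast at hk; linarith⟩
  · rintro ⟨-, hlt⟩
    have hk1 : k = 1 :=
      Int.eq_of_mul_lt_of_lt_mul hα (by push_cast; linarith) (by push_cast; linarith)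
    subst hk1
    exact ⟨⟨hy, by linarith⟩, hz, by push_cast at hk; linarith⟩

/-- If `E x > 0`, then `x ∈ S_α` iff there is no `y < x` with `y ≠ x/2` and
either `0 < E y < E x` or `0 < E y + α/2 < E x`. -/
theorem stmt7 (α : ℝ) (hα : 1 < α) (hirr : Irrational α) (x : ℕ)
    (hx : 0 < x) (hEx : 0 < E α x) :
    x ∈ Sset α ↔
      ¬∃ y : ℕ, 0 < y ∧ y < x ∧ 2 * y ≠ x ∧
        ((0 < E α y ∧ E α y < E α x) ∨
         (0 < E α y + α / 2 ∧ E α y + α / 2 < E α x)) := by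
  have hα₀ : 0 < α := by linarith
  constructor
  · rintro ⟨-, hA, hB⟩ ⟨y, hy, hyx, h2y, hsplit⟩
    obtain ⟨z, rfl⟩ : ∃ z, x = y + z := ⟨x - y, by omega⟩
    have hz : 0 < z := by omega
    rcases hsplit with hsplit | hsplit
    · obtain ⟨hyB, hzB⟩ := (mem_Bset_and_mem_Bset_iff hα₀ hirr hy hz hEx).mpr hsplit
      exact hB y hyB z hzB (by omega) rfl
    · obtain ⟨hyA, hzA⟩ := (mem_Aset_and_mem_Aset_iff hα₀ hirr hy hz hEx).mpr hsplit
      exact hA y hyA z hzA (by omega) rfl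
  · intro hno
    refine ⟨hx, ?_, ?_⟩
    · rintro a ha b hb hab rfl
      exact hno ⟨a, ha.1, Nat.lt_add_of_pos_right hb.1, by omega,
        .inr ((mem_Aset_and_mem_Aset_iff hα₀ hirr ha.1 hb.1 hEx).mp ⟨ha, hb⟩)⟩
    · rintro a ha b hb hab rfl
      exact hno ⟨a, ha.1, Nat.lt_add_of_pos_right hb.1, by omega,
        .inl ((mem_Bset_and_mem_Bset_iff hα₀ hirr ha.1 hb.1 hEx).mp ⟨ha, hb⟩)⟩
end

section
/- Let α > 1 be irrational with convergent numerators p_n and partial quotients a_n, and S_α the avoided set of {A_α, B_α}. For 1 ≤ k ≤ a_{n+2} − 1, the intermediate-fraction numerator x = p_n + k·p_{n+1} lies in S_α if and only if (i) p_{n+1} is even, or (ii) k = 1 and p_n is odd, or (iii) k = a_{n+2} − 1 and p_{n+2} is odd. -/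
/-!
Put `S = p_n + k p_{n+1}`, `R = q_n + k q_{n+1}`, `σ = (-1)^(n+1)`, `e_m = p_m - q_m α`, and
measure a lattice point `(x, u)` by `L (x, u) = σ (x - u α)`, so that
`L (x, round (x / α)) = σ E x`. As `p_{n+1} R - S q_{n+1} = ±1`, the points `(p_{n+1}, q_{n+1})`
and `(S, R)` form a basis of `ℤ²`, with `L`-values `-|e_{n+1}|` and
`ε = (a_{n+2} - k) |e_{n+1}| + |e_{n+2}| ∈ (0, α / 2)`. Hence every lattice point with
`0 < x < 2S` and `0 < L < 2ε` is `(S, R) + c (p_{n+1}, q_{n+1})`, and then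
`|c| ≤ min k (a_{n+2} - k)`.

If `x + y = S` and `σ E x`, `σ E y` have the same sign, their sum is `ε` or `ε - α`. In the first
case `(x, round (x / α))` is such a point with `x < S`, which is impossible; in the second,
`(2x, 2 round (x / α) - σ)` is one, so `S + c p_{n+1} = 2x` for some `c ≠ 0`. Conversely, if
`S + j p_{n+1} = 2x` with `1 ≤ j ≤ min k (a_{n+2} - k)`, then `R + j q_{n+1}` is odd, and `x` and
`S - x` both lie just past half-odd multiples of `α`, on the same side. So `S ∈ S_α` iff all these
`S + j p_{n+1}` are odd, a parity condition that unwinds to (i)–(iii).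
-/

theorem exists_eq_mul_add_mul_of_isUnit {P Q S R : ℤ} (hdet : IsUnit (P * R - S * Q)) (x u : ℤ) :
    ∃ c d : ℤ, x = c * P + d * S ∧ u = c * Q + d * R := by
  have hδ := Int.isUnit_mul_self hdet
  set δ := P * R - S * Q
  exact ⟨δ * (x * R - u * S), δ * (u * P - x * Q),
    by linear_combination (-x) * hδ, by linear_combination (-u) * hδ⟩

theorem eq_one_of_mem_strip {P S c d : ℤ} {f ε : ℝ} (hP : 0 < P) (hf : 0 < f) (hε : 0 < ε)
    (hx0 : 0 < c * P + d * S) (hx : c * P + d * S < 2 * S)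
    (hv0 : 0 < d * ε - c * f) (hv : d * ε - c * f < 2 * ε) : d = 1 := by
  rcases lt_trichotomy d 1 with hd | hd | hd
  · have hc : c < 0 := by
      have : (d : ℝ) ≤ 0 := by exact_mod_cast (show d ≤ 0 by omega)
      have : (c : ℝ) < 0 := by nlinarith
      exact_mod_cast this
    nlinarith
  · exact hd
  · have hc : 0 < c := by
      have : (2 : ℝ) ≤ d := by exact_mod_cast (show 2 ≤ d by omega)
      have : (0 : ℝ) < c := by nlinarith
      exact_mod_cast this
    nlinarith

theorem exists_eq_add_mul_of_mem_strip {P Q S R x u : ℤ} {a b : ℝ}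
    (hdet : IsUnit (P * R - S * Q)) (hP : 0 < P) (hv : a * P + b * Q < 0)
    (hw : 0 < a * S + b * R) (hx0 : 0 < x) (hx : x < 2 * S)
    (hL0 : 0 < a * x + b * u) (hL : a * x + b * u < 2 * (a * S + b * R)) :
    ∃ c : ℤ, x = S + c * P ∧ u = R + c * Q := by
  obtain ⟨c, d, rfl, rfl⟩ := exists_eq_mul_add_mul_of_isUnit hdet x u
  have hL' : a * ↑(c * P + d * S) + b * ↑(c * Q + d * R)
      = d * (a * S + b * R) - c * (-(a * P + b * Q)) := by push_cast; ring
  rw [hL'] at hL0 hL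
  obtain rfl := eq_one_of_mem_strip hP (neg_pos.2 hv) hw hx0 hx hL0 hL
  exact ⟨c, by ring, by ring⟩

theorem mem_Sset_iff {α : ℝ} {s : ℕ} :
    s ∈ Sset α ↔
      0 < s ∧ ∀ x y : ℕ, 0 < x → 0 < y → x ≠ y → x + y = s → E α x * E α y ≤ 0 := by
  simp only [Sset, Aset, Bset, Set.mem_ofPred_eq]
  refine and_congr_right fun _ =>
    ⟨fun ⟨hA, hB⟩ x y hx hy hxy hs => ?_, fun h => ⟨?_, ?_⟩⟩
  · by_contra! hpos
    rcases mul_pos_iff.1 hpos with ⟨hx', hy'⟩ | ⟨hx', hy'⟩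
    · exact hB x ⟨hx, hx'⟩ y ⟨hy, hy'⟩ hxy hs
    · exact hA x ⟨hx, hx'⟩ y ⟨hy, hy'⟩ hxy hs
  · rintro x ⟨hx, hx'⟩ y ⟨hy, hy'⟩ hxy rfl
    exact (h x y hx hy hxy rfl).not_gt (mul_pos_of_neg_of_neg hx' hy')
  · rintro x ⟨hx, hx'⟩ y ⟨hy, hy'⟩ hxy rfl
    exact (h x y hx hy hxy rfl).not_gt (mul_pos hx' hy')

theorem two_mul_abs_E_lt {α : ℝ} (hirr : Irrational α) (hα : 0 < α) {x : ℕ} (hx : 0 < x) :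
    2 * |E α x| < α := by
  set r := (x : ℝ) / α
  have hr : Irrational r := hirr.natCast_div hx.ne'
  have hE : E α x = α * (r - round r) := by simp only [E, r]; field_simp
  have hne : |r - round r| ≠ 1 / 2 := by
    intro h
    rcases abs_eq (by norm_num : (0 : ℝ) ≤ 1 / 2) |>.1 h with h | h
    · exact hr ⟨round r + 1 / 2, by push_cast; linarith⟩
    · exact hr ⟨round r - 1 / 2, by push_cast; linarith⟩
  have hlt := (abs_sub_round r).lt_of_ne hne
  rw [hE, abs_mul, abs_of_pos hα]
  nlinarith

theorem mul_E_neg_of_eq_half_add {α : ℝ} (hα : 0 < α) {σ : ℤ} (hσ : IsUnit σ) {x : ℕ}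
    {m : ℤ} {t : ℝ} (hx : (x : ℝ) = (m + 1 / 2) * α + σ * t) (ht0 : 0 < t) (ht : 2 * t < α) :
    σ * E α x < 0 := by
  have hq : (x : ℝ) / α = m + 1 / 2 + σ * (t / α) := by rw [hx]; field_simp
  have hs0 : 0 < t / α := div_pos ht0 hα
  have hs : t / α < 1 / 2 := by rw [div_lt_iff₀ hα]; linarith
  have hE : E α x = σ * t - (round ((x : ℝ) / α) - m - 1 / 2) * α := by
    simp only [E]; rw [hx]; ring
  rcases Int.isUnit_iff.1 hσ with rfl | rfl
  · have : round ((x : ℝ) / α) = m + 1 := by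
      rw [round_eq, Int.floor_eq_iff, hq]; push_cast; constructor <;> linarith
    rw [hE, this]; push_cast; linarith
  · have : round ((x : ℝ) / α) = m := by
      rw [round_eq, Int.floor_eq_iff, hq]; push_cast; constructor <;> linarith
    rw [hE, this]; push_cast; linarith

section Characterization

variable {α : ℝ} {σ : ℤ} {S P : ℕ} {R Q : ℤ} {ε f : ℝ}

theorem abs_mul_E_lt (hirr : Irrational α) (hα : 0 < α) (hσ : IsUnit σ) {x : ℕ} (hx : 0 < x) :
    |σ * E α x| < α / 2 := by
  have hσabs : |(σ : ℝ)| = 1 := by rcases Int.isUnit_iff.1 hσ with rfl | rfl <;> norm_num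
  have := two_mul_abs_E_lt hirr hα hx
  rw [abs_mul, hσabs]
  linarith

theorem exists_mul_E_add_mul_E_eq (hε : σ * (S - R * α) = ε) {x y : ℕ} (hsum : x + y = S) :
    ∃ N : ℤ, σ * E α x + σ * E α y = ε + N * α := by
  refine ⟨σ * (R - round ((x : ℝ) / α) - round ((y : ℝ) / α)), ?_⟩
  have : (x : ℝ) + y = S := by exact_mod_cast hsum
  simp only [E]; push_cast
  linear_combination σ * this + hε

theorem exists_eq_sub_mul_of_mem_strip (hdet : IsUnit (P * R - S * Q))
    (hε : σ * (S - R * α) = ε) (hf : σ * (P - Q * α) = -f) (hP : 0 < P) (hε0 : 0 < ε)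
    (hf0 : 0 < f) {x u : ℤ} (hx0 : 0 < x) (hx : x < 2 * S) (hL0 : 0 < σ * (x - u * α))
    (hL : σ * (x - u * α) < 2 * ε) :
    ∃ c : ℤ, x = S + c * P ∧ σ * (x - u * α) = ε - c * f := by
  obtain ⟨c, rfl, rfl⟩ := exists_eq_add_mul_of_mem_strip (a := σ) (b := -(σ * α)) hdet
    (by exact_mod_cast hP) (by push_cast; linarith) (by push_cast; linarith) hx0 hx
    (by linarith) (by push_cast; linarith)
  exact ⟨c, rfl, by push_cast; linear_combination hε + c * hf⟩

theorem odd_add_mul_of_mem_Sset (hα : 0 < α) (hσ : IsUnit σ) (hdet : IsUnit (P * R - S * Q))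
    (hε : σ * (S - R * α) = ε) (hf : σ * (P - Q * α) = -f) (hεα : 2 * ε < α)
    (hP : 0 < P) (hf0 : 0 < f) (hSet : S ∈ Sset α) {j : ℕ} (hj : 0 < j) (hjP : j * P < S)
    (hjf : j * f < ε) :
    Odd (S + j * P) := by
  by_contra hodd
  obtain ⟨x, hx⟩ := Nat.not_odd_iff_even.1 hodd
  have hσσ : (σ : ℝ) * σ = 1 := by exact_mod_cast Int.isUnit_mul_self hσ
  obtain ⟨h, hU⟩ : Odd (R + j * Q) := by
    rcases Int.even_or_odd (R + j * Q) with hU | hU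
    · have hdet' : P * R - S * Q = P * (R + j * Q) - (x + x : ℕ) * Q := by
        rw [← hx]; push_cast; ring
      have : Even (P * R - S * Q) := by
        rw [hdet']
        exact (hU.mul_left _).sub (Even.mul_right ⟨(x : ℤ), by push_cast; rfl⟩ _)
      rcases Int.isUnit_iff.1 hdet with h | h <;> rw [h] at this <;> norm_num at this
    · exact hU
  -- `S + j P` lies at `L`-distance `ε - j f` from the odd multiple `(2h + 1) α`
  have hxR : (x : ℝ) = (h + 1 / 2) * α + σ * ((ε - j * f) / 2) := by
    have hxS : (x + x : ℝ) = S + j * P := by exact_mod_cast hx.symm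
    have hUR : (R : ℝ) + j * Q = 2 * h + 1 := by exact_mod_cast hU
    linear_combination (1 / 2 : ℝ) * hxS + (α / 2) * hUR + σ / 2 * hε + (σ * j / 2) * hf
      - ((S - R * α + j * (P - Q * α)) / 2) * hσσ
  have hjP0 := Nat.mul_pos hj hP
  have hjf0 : 0 < j * f := mul_pos (by exact_mod_cast hj) hf0
  have hxS : x < S := by omega
  have hyR : ((S - x : ℕ) : ℝ)
      = ((R - h - 1 : ℤ) + 1 / 2) * α + σ * (ε - (ε - j * f) / 2) := by
    push_cast [hxS.le]
    linear_combination -hxR + σ * hε - (S - R * α) * hσσ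
  have hEx := mul_E_neg_of_eq_half_add hα hσ hxR (by linarith) (by linarith)
  have hEy := mul_E_neg_of_eq_half_add hα hσ hyR (by linarith) (by linarith)
  have hpos : 0 < E α x * E α (S - x) := by nlinarith
  exact ((mem_Sset_iff.1 hSet).2 x (S - x) (by omega) (by omega) (by omega) (by omega)).not_gt
    hpos

theorem not_pos_mul_E_of_add_eq (hirr : Irrational α) (hα : 0 < α) (hσ : IsUnit σ)
    (hdet : IsUnit (P * R - S * Q)) (hε : σ * (S - R * α) = ε) (hf : σ * (P - Q * α) = -f)
    (hεα : 2 * ε < α) (hP : 0 < P) (hε0 : 0 < ε) (hf0 : 0 < f) {x y : ℕ} (hx : 0 < x)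
    (hy : 0 < y) (hsum : x + y = S) (hx0 : 0 < σ * E α x) : ¬ 0 < σ * E α y := by
  intro hy0
  obtain ⟨N, hN⟩ := exists_mul_E_add_mul_E_eq hε hsum
  have hxα := abs_lt.1 (abs_mul_E_lt hirr hα hσ hx)
  have hyα := abs_lt.1 (abs_mul_E_lt hirr hα hσ hy)
  obtain rfl : N = 0 := by
    have h1 : (-1 : ℝ) < N := by nlinarith
    have h2 : (N : ℝ) < 1 := by nlinarith
    have : -1 < N ∧ N < 1 := ⟨by exact_mod_cast h1, by exact_mod_cast h2⟩
    omega
  rw [Int.cast_zero, zero_mul, add_zero] at hN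
  obtain ⟨c, hxc, hval⟩ := exists_eq_sub_mul_of_mem_strip (x := x) (u := round ((x : ℝ) / α))
    hdet hε hf hP hε0 hf0 (by exact_mod_cast hx) (by omega) (by push_cast; exact hx0)
    (by push_cast; change σ * E α x < 2 * ε; linarith)
  push_cast at hval
  change σ * E α x = ε - c * f at hval
  have hc : 0 < c := by
    have : (0 : ℝ) < c := by nlinarith
    exact_mod_cast this
  have : (0 : ℤ) < c * P := mul_pos hc (by exact_mod_cast hP)
  omega

theorem exists_even_add_mul_of_add_eq (hirr : Irrational α) (hα : 0 < α) (hσ : IsUnit σ)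
    (hdet : IsUnit (P * R - S * Q)) (hε : σ * (S - R * α) = ε) (hf : σ * (P - Q * α) = -f)
    (hεα : 2 * ε < α) (hP : 0 < P) (hε0 : 0 < ε) (hf0 : 0 < f) {x y : ℕ} (hx : 0 < x)
    (hy : 0 < y) (hxy : x ≠ y) (hsum : x + y = S) (hx0 : σ * E α x < 0) (hy0 : σ * E α y < 0) :
    ∃ j : ℕ, 0 < j ∧ j * P < S ∧ j * f < ε ∧ Even (S + j * P) := by
  obtain ⟨N, hN⟩ := exists_mul_E_add_mul_E_eq hε hsum
  have hxα := abs_lt.1 (abs_mul_E_lt hirr hα hσ hx)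
  have hyα := abs_lt.1 (abs_mul_E_lt hirr hα hσ hy)
  obtain rfl : N = -1 := by
    have h1 : (-2 : ℝ) < N := by nlinarith
    have h2 : (N : ℝ) < 0 := by nlinarith
    have : -2 < N ∧ N < 0 := ⟨by exact_mod_cast h1, by exact_mod_cast h2⟩
    omega
  push_cast at hN
  have hσσ : (σ : ℝ) * σ = 1 := by exact_mod_cast Int.isUnit_mul_self hσ
  have h2x : σ * (((2 * x : ℤ) : ℝ) - ((2 * round ((x : ℝ) / α) - σ : ℤ) : ℝ) * α)
      = 2 * (σ * E α x) + α := by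
    simp only [E]; push_cast; linear_combination α * hσσ
  obtain ⟨c, hxc, hval⟩ := exists_eq_sub_mul_of_mem_strip (x := 2 * x)
    (u := 2 * round ((x : ℝ) / α) - σ) hdet hε hf hP hε0 hf0 (by omega) (by omega)
    (by rw [h2x]; linarith) (by rw [h2x]; linarith)
  rw [h2x] at hval
  refine ⟨c.natAbs, Int.natAbs_pos.2 ?_, ?_, ?_, ?_⟩
  · rintro rfl; omega
  · have := Int.natAbs_mul c P
    simp only [Int.natAbs_natCast] at this
    omega
  · rw [Nat.cast_natAbs, Int.cast_abs, ← abs_of_pos hf0, ← abs_mul]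
    exact abs_lt.2 ⟨by linarith, by linarith⟩
  · have h' : Even ((S : ℤ) + c * P) := ⟨x, by rw [← hxc]; ring⟩
    have : Even (((S + c.natAbs * P : ℕ) : ℤ)) := by
      push_cast
      simpa [parity_simps, even_abs] using h'
    exact_mod_cast this

theorem mem_Sset_of_forall_odd (hirr : Irrational α) (hα : 0 < α) (hσ : IsUnit σ)
    (hdet : IsUnit (P * R - S * Q)) (hε : σ * (S - R * α) = ε) (hf : σ * (P - Q * α) = -f)
    (hεα : 2 * ε < α) (hP : 0 < P) (hS : 0 < S) (hε0 : 0 < ε) (hf0 : 0 < f)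
    (hodd : ∀ j : ℕ, 0 < j → j * P < S → j * f < ε → Odd (S + j * P)) : S ∈ Sset α := by
  refine mem_Sset_iff.2 ⟨hS, fun x y hx hy hxy hsum => ?_⟩
  have hσσ : (σ : ℝ) * σ = 1 := by exact_mod_cast Int.isUnit_mul_self hσ
  by_contra! hpos
  rcases mul_pos_iff.1 (by nlinarith : 0 < (σ * E α x) * (σ * E α y)) with
    ⟨hx0, hy0⟩ | ⟨hx0, hy0⟩
  · exact not_pos_mul_E_of_add_eq hirr hα hσ hdet hε hf hεα hP hε0 hf0 hx hy hsum hx0 hy0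
  · obtain ⟨j, hj, hjP, hjf, hev⟩ :=
      exists_even_add_mul_of_add_eq hirr hα hσ hdet hε hf hεα hP hε0 hf0 hx hy hxy hsum hx0 hy0
    exact Nat.not_odd_iff_even.2 hev (hodd j hj hjP hjf)

theorem mem_Sset_iff_forall_odd_add_mul (hirr : Irrational α) (hα : 0 < α) (hσ : IsUnit σ)
    (hdet : IsUnit (P * R - S * Q)) (hε : σ * (S - R * α) = ε) (hf : σ * (P - Q * α) = -f)
    (hεα : 2 * ε < α) (hP : 0 < P) (hS : 0 < S) (hε0 : 0 < ε) (hf0 : 0 < f) :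
    S ∈ Sset α ↔ ∀ j : ℕ, 0 < j → j * P < S → j * f < ε → Odd (S + j * P) :=
  ⟨fun hSet _ hj hjP hjf => odd_add_mul_of_mem_Sset hα hσ hdet hε hf hεα hP hf0 hSet hj hjP hjf,
    mem_Sset_of_forall_odd hirr hα hσ hdet hε hf hεα hP hS hε0 hf0⟩

end Characterization

theorem forall_odd_add_mul_iff {p₀ p₁ k a : ℕ} (hp : Odd p₀ ∨ Odd p₁) (hk : 1 ≤ k)
    (hka : k < a) :
    (∀ j, 0 < j → j ≤ k → j ≤ a - k → Odd (p₀ + k * p₁ + j * p₁)) ↔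
      Even p₁ ∨ (k = 1 ∧ Odd p₀) ∨ (k = a - 1 ∧ Odd (a * p₁ + p₀)) := by
  obtain ⟨m, rfl⟩ := Nat.exists_eq_add_of_lt hka
  rw [show k + m + 1 - k = m + 1 by omega, show k + m + 1 - 1 = k + m by omega]
  constructor
  · intro h
    by_contra! hne
    obtain ⟨hp₁, hk₁, hm₁⟩ := hne
    by_cases hS : Even (p₀ + k * p₁ + 1 * p₁)
    · exact Nat.not_odd_iff_even.2 hS (h 1 one_pos hk (by omega))
    · have hk2 : 2 ≤ k := by
        by_contra hk2
        obtain rfl : k = 1 := by omega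
        simp [← Nat.not_even_iff_odd, parity_simps] at *
        tauto
      have hm : 1 ≤ m := by
        by_contra hm
        obtain rfl : m = 0 := by omega
        simp [← Nat.not_even_iff_odd, parity_simps] at *
        tauto
      refine Nat.not_odd_iff_even.2 ?_ (h 2 two_pos hk2 (by omega))
      simp [← Nat.not_even_iff_odd, parity_simps] at *
      tauto
  · rintro (hp₁ | ⟨rfl, hp₀⟩ | ⟨hkm, hp₂⟩) j hj hjk hja
    · simp [← Nat.not_even_iff_odd, parity_simps] at *
      tauto
    · obtain rfl : j = 1 := by omega
      simp [parity_simps, hp₀]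
    · obtain rfl : m = 0 := by omega
      obtain rfl : j = 1 := by omega
      simp [← Nat.not_even_iff_odd, parity_simps] at *
      tauto

theorem mul_lt_add_mul_iff_le {p₀ p₁ k j : ℕ} (h₀ : 0 < p₀) (h : p₀ < p₁) :
    j * p₁ < p₀ + k * p₁ ↔ j ≤ k := by
  constructor
  · intro hj
    by_contra! hkj
    nlinarith
  · intro hj
    nlinarith

theorem mul_lt_mul_add_iff_le {K : Type*} [Field K] [LinearOrder K] [IsStrictOrderedRing K]
    {f g : K} {m j : ℕ} (hg : 0 < g) (hgf : g < f) :
    j * f < m * f + g ↔ j ≤ m := by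
  constructor
  · intro hj
    by_contra! hmj
    have : (m : K) + 1 ≤ j := by exact_mod_cast hmj
    nlinarith
  · intro hj
    have : (j : K) ≤ m := by exact_mod_cast hj
    nlinarith

namespace CF

variable {α : ℝ} (c : CF α)

theorem one_le_t (m : ℕ) : 1 ≤ c.t m := by
  have h := Int.floor_le (c.t m)
  rw [← c.floor_t] at h
  exact le_trans (by exact_mod_cast c.ha m) h

theorem one_lt_t (m : ℕ) : 1 < c.t m := by
  have h : 0 < 1 / c.t (m + 1) := one_div_pos.2 (by linarith [c.one_le_t (m + 1)])
  have ha : (1 : ℝ) ≤ c.a m := by exact_mod_cast c.ha m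
  linarith [c.t_rec m]

theorem one_lt_alpha (c : CF α) : 1 < α := by
  rw [← c.t0]; exact c.one_lt_t 0

theorem p_pos (m : ℕ) : 0 < c.p m := by
  induction m using Nat.strong_induction_on with
  | _ m ih =>
    match m, ih with
    | 0, _ => rw [c.p0]; exact c.ha 0
    | 1, _ => rw [c.p1]; omega
    | m + 2, ih => rw [c.p_rec]; have := ih m (by omega); omega

theorem p_lt_p_succ (m : ℕ) : c.p m < c.p (m + 1) := by
  cases m with
  | zero => rw [c.p0, c.p1]; nlinarith [c.ha 0, c.ha 1]
  | succ m => rw [c.p_rec]; nlinarith [c.ha (m + 2), c.p_pos m, c.p_pos (m + 1)]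

theorem det (m : ℕ) : (c.p (m + 1) * c.q m - c.p m * c.q (m + 1) : ℤ) = (-1) ^ m := by
  induction m with
  | zero => rw [c.p0, c.p1, c.q0, c.q1]; push_cast; ring
  | succ m ih => rw [c.p_rec, c.q_rec]; push_cast; linear_combination -ih

theorem odd_p_or_odd_p_succ (m : ℕ) : Odd (c.p m) ∨ Odd (c.p (m + 1)) := by
  by_contra! h
  simp only [Nat.not_odd_iff_even] at h
  obtain ⟨⟨u, hu⟩, ⟨v, hv⟩⟩ := h
  have := c.det m
  rw [hu, hv] at this
  have h2 : (2 : ℤ) ∣ (-1) ^ m := ⟨v * c.q m - u * c.q (m + 1), by rw [← this]; push_cast; ring⟩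
  rcases neg_one_pow_eq_or ℤ m with h | h <;> rw [h] at h2 <;> norm_num at h2

def err (m : ℕ) : ℝ := c.p m - c.q m * α

theorem err_add_two (m : ℕ) :
    c.err (m + 2) = c.a (m + 2) * c.err (m + 1) + c.err m := by
  simp only [err, c.p_rec, c.q_rec]; push_cast; ring

theorem err_zero : c.err 0 = -(1 / c.t 1) := by
  simp only [err, c.p0, c.q0, ← c.t0, c.t_rec 0]; push_cast; ring

theorem err_succ (m : ℕ) : c.err (m + 1) = -c.err m / c.t (m + 2) := by
  have ht : ∀ m, c.t m ≠ 0 := fun m => (zero_lt_one.trans (c.one_lt_t m)).ne'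
  have hfrac : ∀ m, 1 / c.t (m + 1) = c.t m - c.a m := fun m => by linarith [c.t_rec m]
  induction m with
  | zero =>
    have h1 : c.err 1 = c.a 1 * c.err 0 + 1 := by
      simp only [err, c.p0, c.p1, c.q0, c.q1]; push_cast; ring
    show c.err 1 = -c.err 0 / c.t 2
    rw [h1, c.err_zero, neg_neg, div_eq_mul_one_div (1 / c.t 1), hfrac 1]
    field_simp [ht 1]
    ring
  | succ m ih =>
    have h : c.err m = -(c.err (m + 1) * c.t (m + 2)) := by
      rw [ih]; field_simp [ht (m + 2)]
    rw [c.err_add_two, h, div_eq_mul_one_div, hfrac]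
    ring

theorem neg_one_pow_mul_err_pos (m : ℕ) : 0 < (-1) ^ (m + 1) * c.err m := by
  induction m with
  | zero =>
    rw [c.err_zero]
    have := c.one_lt_t 1
    norm_num
    positivity
  | succ m ih =>
    rw [c.err_succ, show (-1 : ℝ) ^ (m + 1 + 1) * (-c.err m / c.t (m + 2))
      = (-1) ^ (m + 1) * c.err m / c.t (m + 2) by ring]
    exact div_pos ih (by linarith [c.one_lt_t (m + 2)])

theorem abs_err_eq (m : ℕ) : |c.err m| = (-1) ^ (m + 1) * c.err m := by
  rw [← abs_of_pos (c.neg_one_pow_mul_err_pos m), abs_mul, abs_pow, abs_neg, abs_one, one_pow,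
    one_mul]

theorem abs_err_pos (m : ℕ) : 0 < |c.err m| :=
  c.abs_err_eq m ▸ c.neg_one_pow_mul_err_pos m

theorem abs_err_succ_lt (m : ℕ) : |c.err (m + 1)| < |c.err m| := by
  have ht : 0 < c.t (m + 2) := by linarith [c.one_lt_t (m + 2)]
  rw [c.err_succ, abs_div, abs_neg, abs_of_pos ht]
  exact div_lt_self (c.abs_err_pos m) (c.one_lt_t (m + 2))

theorem abs_err_eq_mul_add (m : ℕ) :
    |c.err m| = c.a (m + 2) * |c.err (m + 1)| + |c.err (m + 2)| := by
  rw [c.abs_err_eq, c.abs_err_eq, c.abs_err_eq, c.err_add_two]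
  ring

theorem two_mul_abs_err_lt (m : ℕ) : 2 * |c.err m| < α := by
  have hm : |c.err m| ≤ |c.err 0| := antitone_nat_of_succ_le (f := fun m => |c.err m|)
    (fun m => (c.abs_err_succ_lt m).le) (Nat.zero_le m)
  have h0 : |c.err 0| = 1 / c.t 1 := by
    rw [c.err_zero, abs_neg, abs_of_pos (one_div_pos.2 (by linarith [c.one_lt_t 1]))]
  have h1 : 1 / c.t 1 < 1 := (div_lt_one (by linarith [c.one_lt_t 1])).2 (c.one_lt_t 1)
  have ha : (1 : ℝ) ≤ c.a 0 := by exact_mod_cast c.ha 0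
  linarith [c.t0 ▸ c.t_rec 0]

theorem mem_Sset_iff_forall_odd (hirr : Irrational α) {n k : ℕ} (hk : k ≤ c.a (n + 2) - 1) :
    c.p n + k * c.p (n + 1) ∈ Sset α ↔ ∀ j, 0 < j → j ≤ k → j ≤ c.a (n + 2) - k →
      Odd (c.p n + k * c.p (n + 1) + j * c.p (n + 1)) := by
  have hε : ((-1) ^ (n + 1) : ℤ) * (((c.p n + k * c.p (n + 1) : ℕ) : ℝ)
      - (((c.q n + k * c.q (n + 1) : ℕ) : ℤ) : ℝ) * α) = |c.err n| - k * |c.err (n + 1)| := by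
    rw [c.abs_err_eq, c.abs_err_eq]; simp only [err]; push_cast; ring
  have hf : ((-1) ^ (n + 1) : ℤ) * (((c.p (n + 1) : ℕ) : ℝ) - (((c.q (n + 1) : ℕ) : ℤ) : ℝ) * α)
      = -|c.err (n + 1)| := by
    rw [c.abs_err_eq]; simp only [err]; push_cast; ring
  have hdet : ((c.p (n + 1) : ℕ) * ((c.q n + k * c.q (n + 1) : ℕ) : ℤ)
      - (c.p n + k * c.p (n + 1) : ℕ) * (c.q (n + 1) : ℕ)) = (-1) ^ n := by
    push_cast; linear_combination c.det n
  have hεfg : |c.err n| - k * |c.err (n + 1)|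
      = ((c.a (n + 2) - k : ℕ) : ℝ) * |c.err (n + 1)| + |c.err (n + 2)| := by
    rw [c.abs_err_eq_mul_add n]; push_cast [show k ≤ c.a (n + 2) by omega]; ring
  have hεα : 2 * (|c.err n| - k * |c.err (n + 1)|) < α := by
    have := mul_nonneg k.cast_nonneg (c.abs_err_pos (n + 1)).le
    linarith [c.two_mul_abs_err_lt n]
  have hε0 : 0 < |c.err n| - k * |c.err (n + 1)| :=
    hεfg ▸ add_pos_of_nonneg_of_pos (by positivity) (c.abs_err_pos (n + 2))
  have hjP (j : ℕ) := mul_lt_add_mul_iff_le (j := j) (k := k) (c.p_pos n) (c.p_lt_p_succ n)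
  have hjf (j : ℕ) := mul_lt_mul_add_iff_le (j := j) (m := c.a (n + 2) - k)
    (c.abs_err_pos (n + 2)) (c.abs_err_succ_lt (n + 1))
  rw [mem_Sset_iff_forall_odd_add_mul hirr (zero_lt_one.trans c.one_lt_alpha)
    (isUnit_one.neg.pow _) (hdet ▸ isUnit_one.neg.pow _) hε hf hεα (c.p_pos (n + 1))
    (by have := c.p_pos n; omega) hε0 (c.abs_err_pos (n + 1))]
  simp only [hjP, hεfg, hjf]

end CF

theorem stmt11_general (α : ℝ) (hirr : Irrational α) (c : CF α)
    (n k : ℕ) (hk1 : 1 ≤ k) (hk2 : k ≤ c.a (n + 2) - 1) :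
    c.p n + k * c.p (n + 1) ∈ Sset α ↔
      Even (c.p (n + 1)) ∨
      (k = 1 ∧ Odd (c.p n)) ∨
      (k = c.a (n + 2) - 1 ∧ Odd (c.p (n + 2))) := by
  rw [c.mem_Sset_iff_forall_odd hirr hk2,
    forall_odd_add_mul_iff (c.odd_p_or_odd_p_succ n) hk1 (by omega), c.p_rec]

/-- For `1 ≤ k ≤ a_{n+2} - 1`, the intermediate-fraction numerator
`p_n + k * p_{n+1}` is in `S_α` iff (i) `p_{n+1}` is even, or (ii) `k = 1`
and `p_n` is odd, or (iii) `k = a_{n+2} - 1` and `p_{n+2}` is odd. -/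
theorem stmt11 (α : ℝ) (hα : 1 < α) (hirr : Irrational α) (c : CF α)
    (n k : ℕ) (hk1 : 1 ≤ k) (hk2 : k ≤ c.a (n + 2) - 1) :
    c.p n + k * c.p (n + 1) ∈ Sset α ↔
      Even (c.p (n + 1)) ∨
      (k = 1 ∧ Odd (c.p n)) ∨
      (k = c.a (n + 2) - 1 ∧ Odd (c.p (n + 2))) :=
  stmt11_general α hirr c n k hk1 hk2
end
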